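/- arXiv:2203.02836 — 3 statements merged into one kernel-verified Lean document; each statement's English description precedes it below -/
import Mathlib

section
/- Let π̃ = Z·π be an unnormalized target, q(x) a proposal density mutually absolutely continuous with π, and for each x let W(x) ≥ 0 be a random variable with E[W(x)] = 1/q(x) and relative variance v(x) = Var(q(x)·W(x)). Then the estimator Ẑ = π̃(x)·W(x) with x ~ q satisfies Var(Ẑ/Z) = χ²(π ‖ q) + E_{x~q}[(π(x)/q(x))² · v(x)]. -/
open MeasureTheory

/-! Conditionally on `x`, the variable `q(x)·W(x)` has mean `1` and variance `v(x)`, so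
`E[(π(x)·W(x))²] = (π(x)/q(x))² · (1 + v(x))` and `E[π(x)·W(x)] = π(x)/q(x)`. Averaging over
`x ~ q`, the second moment of `Ẑ/Z = π(x)·W(x)` is `∫ q (π/q)² (1 + v)` and its mean is
`∫ π = 1`; their difference is `χ²(π‖q) + E_q[(π/q)² v]`. -/

section MetaInference

variable {Ω : Type*} [MeasurableSpace Ω] (P : Measure Ω) {W : Ω → ℝ} {a b : ℝ}

theorem mul_integral_const_mul_eq_of_integral_eq_inv (hab : a = 0 → b = 0)
    (hW : a ≠ 0 → ∫ ω, W ω ∂P = 1 / a) :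
    a * ∫ ω, b * W ω ∂P = b := by
  by_cases ha : a = 0
  · simp [ha, hab ha]
  · rw [integral_const_mul, hW ha]
    field_simp

theorem mul_integral_const_mul_sq_eq_of_integral_eq_inv (hW : a ≠ 0 → ∫ ω, W ω ∂P = 1 / a) :
    a * ∫ ω, (b * W ω) ^ 2 ∂P
      = a * (b / a) ^ 2
        + a * ((b / a) ^ 2 * ((∫ ω, (a * W ω) ^ 2 ∂P) - (∫ ω, a * W ω ∂P) ^ 2)) := by
  by_cases ha : a = 0
  · simp [ha]
  have second_moment : ∀ c : ℝ, ∫ ω, (c * W ω) ^ 2 ∂P = c ^ 2 * ∫ ω, W ω ^ 2 ∂P := fun c => by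
    simp only [mul_pow, integral_const_mul]
  have mean_one : ∫ ω, a * W ω ∂P = 1 := by
    rw [integral_const_mul, hW ha]
    field_simp
  rw [second_moment, second_moment, mean_one]
  field_simp
  ring

end MetaInference

theorem ravi_importance_variance_decomposition_general
    {X Ω : Type*} [MeasurableSpace X] [MeasurableSpace Ω]
    (μ : Measure X) (P : Measure Ω)
    (π q : X → ℝ)
    (hπ_norm : ∫ x, π x ∂μ = 1)
    (habs : ∀ x, q x = 0 ↔ π x = 0)
    (W : X → Ω → ℝ) (v : X → ℝ)
    (hW_mean : ∀ x, q x ≠ 0 → ∫ ω, W x ω ∂P = 1 / q x)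
    (hv : ∀ x, v x = (∫ ω, (q x * W x ω) ^ 2 ∂P) - (∫ ω, q x * W x ω ∂P) ^ 2)
    (hint3 : Integrable (fun x => q x * (π x / q x) ^ 2) μ)
    (hint4 : Integrable (fun x => q x * ((π x / q x) ^ 2 * v x)) μ) :
    (∫ x, q x * (∫ ω, (π x * W x ω) ^ 2 ∂P) ∂μ)
        - (∫ x, q x * (∫ ω, π x * W x ω ∂P) ∂μ) ^ 2
      = ((∫ x, q x * (π x / q x) ^ 2 ∂μ) - 1)
        + ∫ x, q x * ((π x / q x) ^ 2 * v x) ∂μ := by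
  have second_moment : (∫ x, q x * (∫ ω, (π x * W x ω) ^ 2 ∂P) ∂μ)
      = (∫ x, q x * (π x / q x) ^ 2 ∂μ) + ∫ x, q x * ((π x / q x) ^ 2 * v x) ∂μ := by
    rw [← integral_add hint3 hint4]
    congr 1 with x
    rw [hv]
    exact mul_integral_const_mul_sq_eq_of_integral_eq_inv P (hW_mean x)
  have mean : (∫ x, q x * (∫ ω, π x * W x ω ∂P) ∂μ) = 1 := by
    simp_rw [mul_integral_const_mul_eq_of_integral_eq_inv P (habs _).mp (hW_mean _)]
    exact hπ_norm
  rw [second_moment, mean]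
  ring

/-- Inductive step of RAVI Theorem 3: the relative variance of
`Ẑ = π̃(x)·W(x)`, `x ~ q`, decomposes as `χ²(π‖q)` plus the expected relative
variance `v(x) = Var(q(x)·W(x))` of the meta-inference estimator. -/
theorem ravi_importance_variance_decomposition
    {X Ω : Type*} [MeasurableSpace X] [MeasurableSpace Ω]
    (μ : Measure X) (P : Measure Ω) [IsProbabilityMeasure P]
    (π q : X → ℝ) (Z : ℝ) (hZ : 0 < Z)
    (hπ_nonneg : ∀ x, 0 ≤ π x) (hπ_norm : ∫ x, π x ∂μ = 1)
    (hq_nonneg : ∀ x, 0 ≤ q x) (hq_norm : ∫ x, q x ∂μ = 1)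
    (habs : ∀ x, q x = 0 ↔ π x = 0)
    (W : X → Ω → ℝ) (v : X → ℝ)
    (hW_nonneg : ∀ x ω, 0 ≤ W x ω)
    (hW_int : ∀ x, Integrable (W x) P)
    (hW_sq_int : ∀ x, Integrable (fun ω => (W x ω) ^ 2) P)
    (hW_mean : ∀ x, q x ≠ 0 → ∫ ω, W x ω ∂P = 1 / q x)
    (hv : ∀ x, v x = (∫ ω, (q x * W x ω) ^ 2 ∂P) - (∫ ω, q x * W x ω ∂P) ^ 2)
    (hint1 : Integrable (fun x => q x * ∫ ω, (π x * W x ω) ^ 2 ∂P) μ)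
    (hint2 : Integrable (fun x => q x * ∫ ω, π x * W x ω ∂P) μ)
    (hint3 : Integrable (fun x => q x * (π x / q x) ^ 2) μ)
    (hint4 : Integrable (fun x => q x * ((π x / q x) ^ 2 * v x)) μ) :
    (∫ x, q x * (∫ ω, (π x * W x ω) ^ 2 ∂P) ∂μ)
        - (∫ x, q x * (∫ ω, π x * W x ω ∂P) ∂μ) ^ 2
      = ((∫ x, q x * (π x / q x) ^ 2 ∂μ) - 1)
        + ∫ x, q x * ((π x / q x) ^ 2 * v x) ∂μ :=
  ravi_importance_variance_decomposition_general μ P π q hπ_norm habs W v hW_mean hv hint3 hint4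
end

section
/- Let p(x,y) be a joint density with marginal p(y), q(x) a density mutually absolutely continuous with p(·|y), and for each x let U(x) be a random variable with E[U(x)] ≥ log q(x), defining B_U(x) = E[U(x)] − log q(x) ≥ 0. Then L := E_{x~q}[log p(x,y) − U(x)] satisfies log p(y) − L = KL(q ‖ p(·|y)) + E_{x~q}[B_U(x)]; in particular L ≤ log p(y). -/
/-!
Averaging against `q` (which has total mass one), the gap `log p(y) - L` is the integral of the
pointwise identity `log p(y) - (log p(x,y) - E[U(x)]) = log (q(x) / p(x|y)) + B_U(x)`.
The first term integrates to the Kullback–Leibler divergence, which is nonnegative by Gibbs'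
inequality (from `1 - t⁻¹ ≤ log t`), and the second is nonnegative by assumption.
-/

open MeasureTheory Real

lemma sub_le_mul_log_div {a b : ℝ} (ha : 0 ≤ a) (hb : 0 ≤ b) (hab : b = 0 → a = 0) :
    a - b ≤ a * log (a / b) := by
  rcases ha.eq_or_lt with rfl | ha
  · simpa using hb
  have hb : 0 < b := hb.lt_of_ne' fun h => ha.ne' (hab h)
  calc a - b = a * (1 - (a / b)⁻¹) := by field_simp
    _ ≤ a * log (a / b) :=
      mul_le_mul_of_nonneg_left (one_sub_inv_le_log_of_pos (div_pos ha hb)) ha.le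

theorem integral_mul_log_div_nonneg {X : Type*} [MeasurableSpace X] {μ : Measure X}
    {f g : X → ℝ} (hf : ∀ x, 0 ≤ f x) (hg : ∀ x, 0 ≤ g x) (hfg : ∀ x, g x = 0 → f x = 0)
    (hf_int : Integrable f μ) (hg_int : Integrable g μ)
    (h_mass : ∫ x, g x ∂μ ≤ ∫ x, f x ∂μ)
    (h_int : Integrable (fun x => f x * log (f x / g x)) μ) :
    0 ≤ ∫ x, f x * log (f x / g x) ∂μ :=
  calc 0 ≤ ∫ x, f x ∂μ - ∫ x, g x ∂μ := sub_nonneg.2 h_mass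
    _ = ∫ x, f x - g x ∂μ := (integral_sub hf_int hg_int).symm
    _ ≤ ∫ x, f x * log (f x / g x) ∂μ :=
      integral_mono (hf_int.sub hg_int) h_int fun x => sub_le_mul_log_div (hf x) (hg x) (hfg x)

lemma mul_log_sub_mul_eq {q p Z u : ℝ} (hqp : q ≠ 0 → p ≠ 0) (hZ : Z ≠ 0) :
    q * log Z - q * (log p - u) = q * log (q / (p / Z)) + q * (u - log q) := by
  by_cases hq : q = 0
  · simp [hq]
  rw [log_div hq (div_ne_zero (hqp hq) hZ), log_div (hqp hq) hZ]
  ring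

theorem ravi_surrogate_elbo_bias_general
    {X Y Ω : Type*} [MeasurableSpace X] [MeasurableSpace Ω]
    (μ : Measure X) (P : Measure Ω)
    (p : X → Y → ℝ) (y : Y) (py : ℝ) (q : X → ℝ)
    (U : X → Ω → ℝ) (BU : X → ℝ) (L : ℝ)
    (hp_nonneg : ∀ x, 0 ≤ p x y)
    (hpy : py = ∫ x, p x y ∂μ) (hpy_pos : 0 < py)
    (hq_nonneg : ∀ x, 0 ≤ q x) (hq_norm : ∫ x, q x ∂μ = 1)
    (habs : ∀ x, q x = 0 ↔ p x y = 0)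
    (hBU : ∀ x, BU x = (∫ ω, U x ω ∂P) - Real.log (q x))
    (hBU_nonneg : ∀ x, 0 ≤ BU x)
    (hL : L = ∫ x, q x * (Real.log (p x y) - ∫ ω, U x ω ∂P) ∂μ)
    (hint1 : Integrable
      (fun x => q x * (Real.log (p x y) - ∫ ω, U x ω ∂P)) μ)
    (hint2 : Integrable (fun x => q x * Real.log (q x / (p x y / py))) μ)
    (hint3 : Integrable (fun x => q x * BU x) μ) :
    Real.log py - L
        = (∫ x, q x * Real.log (q x / (p x y / py)) ∂μ)
          + ∫ x, q x * BU x ∂μ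
      ∧ L ≤ Real.log py := by
  have hq_int : Integrable q μ := .of_integral_ne_zero (by simp [hq_norm])
  have hp_int : Integrable (fun x => p x y) μ := .of_integral_ne_zero (hpy ▸ hpy_pos.ne')
  have hpq : ∀ x, p x y = 0 → q x = 0 := fun x => (habs x).2
  have h_gap : log py - L
      = (∫ x, q x * log (q x / (p x y / py)) ∂μ) + ∫ x, q x * BU x ∂μ :=
    calc log py - L = ∫ x, q x * log py - q x * (log (p x y) - ∫ ω, U x ω ∂P) ∂μ := by
          rw [integral_sub (hq_int.mul_const _) hint1, integral_mul_const, hq_norm, one_mul, hL]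
      _ = ∫ x, q x * log (q x / (p x y / py)) + q x * BU x ∂μ :=
          integral_congr_ae <| ae_of_all _ fun x => by
            simp only [hBU x]; exact mul_log_sub_mul_eq (mt (hpq x)) hpy_pos.ne'
      _ = _ := integral_add hint2 hint3
  have h_kl : 0 ≤ ∫ x, q x * log (q x / (p x y / py)) ∂μ :=
    integral_mul_log_div_nonneg hq_nonneg (fun x => div_nonneg (hp_nonneg x) hpy_pos.le)
      (fun x h => hpq x ((div_eq_zero_iff.1 h).resolve_right hpy_pos.ne')) hq_int
      (hp_int.div_const _) (by rw [integral_div, ← hpy, div_self hpy_pos.ne', hq_norm]) hint2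
  have h_bias : 0 ≤ ∫ x, q x * BU x ∂μ :=
    integral_nonneg fun x => mul_nonneg (hq_nonneg x) (hBU_nonneg x)
  exact ⟨h_gap, by linarith⟩

/-- Inductive step of RAVI Theorem 4 for lower bounds: replacing `log q(x)` by a
stochastic upper bound `U(x)` gives a surrogate ELBO `L` whose gap from
`log p(y)` is `KL(q ‖ p(·|y))` plus the expected meta-inference bias. -/
theorem ravi_surrogate_elbo_bias
    {X Y Ω : Type*} [MeasurableSpace X] [MeasurableSpace Y] [MeasurableSpace Ω]
    (μ : Measure X) (P : Measure Ω) [IsProbabilityMeasure P]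
    (p : X → Y → ℝ) (y : Y) (py : ℝ) (q : X → ℝ)
    (U : X → Ω → ℝ) (BU : X → ℝ) (L : ℝ)
    (hp_nonneg : ∀ x, 0 ≤ p x y)
    (hpy : py = ∫ x, p x y ∂μ) (hpy_pos : 0 < py)
    (hq_nonneg : ∀ x, 0 ≤ q x) (hq_norm : ∫ x, q x ∂μ = 1)
    (habs : ∀ x, q x = 0 ↔ p x y = 0)
    (hU_int : ∀ x, Integrable (U x) P)
    (hBU : ∀ x, BU x = (∫ ω, U x ω ∂P) - Real.log (q x))
    (hBU_nonneg : ∀ x, 0 ≤ BU x)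
    (hL : L = ∫ x, q x * (Real.log (p x y) - ∫ ω, U x ω ∂P) ∂μ)
    (hint1 : Integrable
      (fun x => q x * (Real.log (p x y) - ∫ ω, U x ω ∂P)) μ)
    (hint2 : Integrable (fun x => q x * Real.log (q x / (p x y / py))) μ)
    (hint3 : Integrable (fun x => q x * BU x) μ) :
    Real.log py - L
        = (∫ x, q x * Real.log (q x / (p x y / py)) ∂μ)
          + ∫ x, q x * BU x ∂μ
      ∧ L ≤ Real.log py :=
  ravi_surrogate_elbo_bias_general μ P p y py q U BU L hp_nonneg hpy hpy_pos hq_nonneg hq_norm habs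
    hBU hBU_nonneg hL hint1 hint2 hint3
end

section
/- Let π̃(x) = Z·π(x) be an unnormalized density and q a proposal density with π mutually absolutely continuous with q. Consider the N-particle sampling-importance-resampling procedure: draw x₁,…,x_N iid from q, set wᵢ = π̃(xᵢ)/q(xᵢ), draw index j with probability proportional to w_j, and output x = x_j together with the weight Ẑ = (1/N)∑ᵢ wᵢ. Then, letting Q_N denote the marginal distribution of the output x, the conditional expectation of Ẑ given x equals Z·π(x)/Q_N(x), and the unconditional expectation E[Ẑ] = Z. -/
open MeasureTheory

/-- Helper: the preimage of a `μ`-null set under a coordinate evaluation is null for the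
product measure. -/
lemma sir_pi_eval_preimage_null {X : Type*} [MeasurableSpace X] (μ : Measure X) [SigmaFinite μ]
    {N : ℕ} (i : Fin N) {s : Set X} (hs : μ s = 0) :
    (Measure.pi fun _ : Fin N => μ) ((fun y => y i) ⁻¹' s) = 0 := by
  obtain ⟨t, hst, htm, ht0⟩ := exists_measurable_superset_of_null hs
  refine measure_mono_null (Set.preimage_mono hst) ?_
  have h : (fun y : Fin N → X => y i) ⁻¹' t =
      Set.pi Set.univ (Function.update (fun _ : Fin N => Set.univ) i t) := by
    ext y
    simp only [Set.mem_preimage, Set.mem_univ_pi, Function.update_apply]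
    constructor
    · intro h j; split <;> simp_all
    · intro h; have := h i; simpa using this
  rw [h, Measure.pi_pi]
  exact Finset.prod_eq_zero (Finset.mem_univ i) (by simp [ht0])

/-- N-particle sampling-importance-resampling is properly weighted for `π`:
the output `x = x_j` (with `j` drawn ∝ `w_j = π̃(x_j)/q(x_j)`) and weight
`Ẑ = (1/N) ∑ wᵢ` satisfy `E[Ẑ | x] = Z·π(x)/Q_N(x)` — stated via the
defining property of conditional expectation against the marginal density
`Q_N` of the output — and `E[Ẑ] = Z`. -/
theorem sir_properly_weighted
    {X : Type*} [MeasurableSpace X] (μ : Measure X) [SigmaFinite μ]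
    (N : ℕ) (hN : 0 < N)
    (π q : X → ℝ) (Z : ℝ) (hZ : 0 < Z)
    (hπ_nonneg : ∀ x, 0 ≤ π x) (hπ_norm : ∫ x, π x ∂μ = 1)
    (hq_nonneg : ∀ x, 0 ≤ q x) (hq_norm : ∫ x, q x ∂μ = 1)
    (habs : ∀ x, q x = 0 ↔ π x = 0)
    (w : X → ℝ) (hw : ∀ x, w x = Z * π x / q x)
    (QN : X → ℝ) (hQN_nonneg : ∀ x, 0 ≤ QN x)
    -- `QN` is the marginal density of the SIR output:
    (hQN : ∀ A : Set X, MeasurableSet A →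
      ∫ y, (∏ i, q (y i)) *
          ∑ j, (w (y j) / ∑ i, w (y i)) * A.indicator (fun _ => (1 : ℝ)) (y j)
        ∂(Measure.pi fun _ : Fin N => μ)
      = ∫ x in A, QN x ∂μ)
    (hint1 : Integrable
      (fun y : Fin N → X => (∏ i, q (y i)) *
        ((∑ j, w (y j) / ∑ i, w (y i)) * ((∑ i, w (y i)) / (N : ℝ))))
      (Measure.pi fun _ : Fin N => μ))
    (hint2 : ∀ A : Set X, MeasurableSet A → Integrable
      (fun y : Fin N → X => (∏ i, q (y i)) *
        ∑ j, (w (y j) / ∑ i, w (y i)) * A.indicator (fun _ => (1 : ℝ)) (y j)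
          * ((∑ i, w (y i)) / (N : ℝ)))
      (Measure.pi fun _ : Fin N => μ)) :
    (∀ A : Set X, MeasurableSet A →
      ∫ y, (∏ i, q (y i)) *
          ∑ j, (w (y j) / ∑ i, w (y i)) * A.indicator (fun _ => (1 : ℝ)) (y j)
            * ((∑ i, w (y i)) / (N : ℝ))
        ∂(Measure.pi fun _ : Fin N => μ)
      = ∫ x in A, (Z * π x / QN x) * QN x ∂μ)
    ∧ ∫ y, (∏ i, q (y i)) *
          ((∑ j, w (y j) / ∑ i, w (y i)) * ((∑ i, w (y i)) / (N : ℝ)))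
        ∂(Measure.pi fun _ : Fin N => μ) = Z := by
  letI : MeasureSpace X := ⟨μ⟩
  haveI : SigmaFinite (volume : Measure X) := ‹SigmaFinite μ›
  have hNc : (N : ℝ) ≠ 0 := Nat.cast_ne_zero.mpr hN.ne'
  set j0 : Fin N := ⟨0, hN⟩ with hj0
  -- integrability of q and π
  have hq_int : Integrable q μ := by
    by_contra h; rw [integral_undef h] at hq_norm; norm_num at hq_norm
  have hπ_int : Integrable π μ := by
    by_contra h; rw [integral_undef h] at hπ_norm; norm_num at hπ_norm
  -- basic pointwise facts
  have hwnn : ∀ x, 0 ≤ w x := fun x => by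
    rw [hw]; exact div_nonneg (mul_nonneg hZ.le (hπ_nonneg x)) (hq_nonneg x)
  have hqw : ∀ x, q x * w x = Z * π x := by
    intro x
    rcases eq_or_ne (q x) 0 with h | h
    · rw [h, zero_mul, (habs x).mp h, mul_zero]
    · rw [hw, mul_div_cancel₀ _ h]
  -- key pointwise simplification
  have hpt : ∀ (g : X → ℝ) (y : Fin N → X),
      (∏ i, q (y i)) *
        ∑ j, (w (y j) / ∑ i, w (y i)) * g (y j) * ((∑ i, w (y i)) / (N : ℝ))
      = (N : ℝ)⁻¹ * ∑ j, (∏ i, q (y i)) * (w (y j) * g (y j)) := by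
    intro g y
    by_cases hS : (∑ i, w (y i)) = 0
    · have hw0 : ∀ i : Fin N, w (y i) = 0 := fun i =>
        (Finset.sum_eq_zero_iff_of_nonneg (fun i _ => hwnn (y i))).mp hS i (Finset.mem_univ i)
      simp [hS, hw0]
    · rw [Finset.mul_sum, Finset.mul_sum]
      refine Finset.sum_congr rfl fun j _ => ?_
      have h1 : (∏ i, q (y i)) *
          ((w (y j) / ∑ i, w (y i)) * g (y j) * ((∑ i, w (y i)) / (N : ℝ)))
          = (N : ℝ)⁻¹ * ((∏ i, q (y i)) * (w (y j) * g (y j)))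
            * ((∑ i, w (y i)) / (∑ i, w (y i))) := by ring
      rw [h1, div_self hS, mul_one]
  -- per-term Fubini computation
  have hprod : ∀ (g : X → ℝ), Integrable (fun x => Z * π x * g x) μ → ∀ j : Fin N,
      (∫ y, (∏ i, q (y i)) * (w (y j) * g (y j)) ∂(Measure.pi fun _ : Fin N => μ)
        = ∫ x, Z * π x * g x ∂μ)
      ∧ Integrable (fun y : Fin N → X => (∏ i, q (y i)) * (w (y j) * g (y j)))
          (Measure.pi fun _ : Fin N => μ) := by
    intro g hg j
    set F : Fin N → X → ℝ := fun i => if i = j then (fun x => Z * π x * g x) else q with hF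
    have hFi : ∀ i, Integrable (F i) μ := by
      intro i; simp only [hF]; split
      · exact hg
      · exact hq_int
    have hpteq : ∀ y : Fin N → X,
        (∏ i, q (y i)) * (w (y j) * g (y j)) = ∏ i, F i (y i) := by
      intro y
      have h1 : ∏ i, F i (y i) = F j (y j) * ∏ i ∈ Finset.univ.erase j, F i (y i) :=
        (Finset.mul_prod_erase Finset.univ (fun i => F i (y i)) (Finset.mem_univ j)).symm
      have h2 : ∏ i, q (y i) = q (y j) * ∏ i ∈ Finset.univ.erase j, q (y i) :=
        (Finset.mul_prod_erase Finset.univ (fun i => q (y i)) (Finset.mem_univ j)).symm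
      have h3 : ∏ i ∈ Finset.univ.erase j, F i (y i) = ∏ i ∈ Finset.univ.erase j, q (y i) :=
        Finset.prod_congr rfl fun i hi => by simp [hF, Finset.ne_of_mem_erase hi]
      have h4 : F j (y j) = Z * π (y j) * g (y j) := by simp [hF]
      rw [h1, h3, h2, h4, ← hqw]
      ring
    constructor
    · calc ∫ y, (∏ i, q (y i)) * (w (y j) * g (y j)) ∂(Measure.pi fun _ : Fin N => μ)
          = ∫ y, ∏ i, F i (y i) ∂(Measure.pi fun _ : Fin N => μ) := by simp_rw [hpteq]
        _ = ∏ i, ∫ x, F i x ∂μ := integral_fintype_prod_eq_prod (ι := Fin N) F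
        _ = ∫ x, Z * π x * g x ∂μ := by
            rw [← Finset.mul_prod_erase Finset.univ (fun i => ∫ x, F i x ∂μ)
              (Finset.mem_univ j)]
            have h5 : ∏ i ∈ Finset.univ.erase j, ∫ x, F i x ∂μ = 1 :=
              Finset.prod_eq_one fun i hi => by
                simp [hF, Finset.ne_of_mem_erase hi, hq_norm]
            rw [h5]; simp [hF]
    · have h6 := Integrable.fintype_prod (𝕜 := ℝ) hFi
      exact (integrable_congr (Filter.Eventually.of_forall fun y => (hpteq y).symm)).mp h6
  -- indicator facts
  have hind : ∀ (A : Set X) (x : X),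
      Z * π x * A.indicator (fun _ => (1 : ℝ)) x = A.indicator (fun x => Z * π x) x := by
    intro A x; by_cases h : x ∈ A <;> simp [h]
  have hg_int : ∀ A : Set X, MeasurableSet A →
      Integrable (fun x => Z * π x * A.indicator (fun _ => (1 : ℝ)) x) μ := by
    intro A hA
    have h := (hπ_int.const_mul Z).indicator hA
    rw [show (fun x => Z * π x * A.indicator (fun _ => (1 : ℝ)) x)
      = A.indicator (fun x => Z * π x) from funext (hind A)]
    exact h
  have cA : ∀ A : Set X, MeasurableSet A →
      ∫ x, Z * π x * A.indicator (fun _ => (1 : ℝ)) x ∂μ = ∫ x in A, Z * π x ∂μ := by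
    intro A hA
    simp_rw [hind A]
    exact integral_indicator hA
  -- main computation of the LHS of part 1
  have hmain : ∀ A : Set X, MeasurableSet A →
      ∫ y, (∏ i, q (y i)) *
          ∑ j, (w (y j) / ∑ i, w (y i)) * A.indicator (fun _ => (1 : ℝ)) (y j)
            * ((∑ i, w (y i)) / (N : ℝ))
        ∂(Measure.pi fun _ : Fin N => μ)
      = ∫ x in A, Z * π x ∂μ := by
    intro A hA
    simp_rw [hpt (A.indicator (fun _ => (1 : ℝ)))]
    rw [integral_const_mul,
      integral_finset_sum _ (fun j _ => (hprod _ (hg_int A hA) j).2),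
      Finset.sum_congr rfl (fun j _ => ((hprod _ (hg_int A hA) j).1.trans (cA A hA))),
      Finset.sum_const, Finset.card_univ, Fintype.card_fin, nsmul_eq_mul,
      ← mul_assoc, inv_mul_cancel₀ hNc, one_mul]
  -- QN is integrable with integral 1
  have huniv := hQN Set.univ MeasurableSet.univ
  have hcal : ∀ y : Fin N → X,
      (∏ i, q (y i)) *
        ∑ j, (w (y j) / ∑ i, w (y i)) * Set.univ.indicator (fun _ => (1 : ℝ)) (y j)
      = ∏ i, q (y i) := by
    intro y
    by_cases hp : (∏ i, q (y i)) = 0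
    · simp [hp]
    · have hqpos : ∀ i, 0 < q (y i) := fun i =>
        lt_of_le_of_ne (hq_nonneg _)
          (Ne.symm (Finset.prod_ne_zero_iff.mp hp i (Finset.mem_univ i)))
      have hwpos : ∀ i, 0 < w (y i) := by
        intro i
        rw [hw]
        refine div_pos (mul_pos hZ ?_) (hqpos i)
        exact lt_of_le_of_ne (hπ_nonneg _) (fun h => (hqpos i).ne' ((habs _).mpr h.symm))
      have hS : 0 < ∑ i, w (y i) :=
        Finset.sum_pos (fun i _ => hwpos i) ⟨j0, Finset.mem_univ _⟩
      have h7 : ∑ j, (w (y j) / ∑ i, w (y i)) * Set.univ.indicator (fun _ => (1 : ℝ)) (y j)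
          = (∑ i, w (y i)) / (∑ i, w (y i)) := by
        calc ∑ j, (w (y j) / ∑ i, w (y i)) * Set.univ.indicator (fun _ => (1 : ℝ)) (y j)
            = ∑ j, w (y j) / ∑ i, w (y i) := Finset.sum_congr rfl fun j _ => by simp
          _ = (∑ i, w (y i)) / (∑ i, w (y i)) := (Finset.sum_div _ _ _).symm
      rw [h7, div_self hS.ne', mul_one]
  have hQint1 : ∫ x, QN x ∂μ = 1 := by
    rw [Measure.restrict_univ] at huniv
    simp_rw [hcal] at huniv
    rw [← huniv]
    have h8 := integral_fintype_prod_eq_pow (ι := Fin N) q (μ := μ)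
    rw [show (∫ y, ∏ i, q (y i) ∂(Measure.pi fun _ : Fin N => μ))
      = (∫ x, q x ∂μ) ^ Fintype.card (Fin N) from h8, hq_norm, one_pow]
  have hQN_int : Integrable QN μ := by
    by_contra h; rw [integral_undef h] at hQint1; norm_num at hQint1
  -- measurable versions
  set ρ := hQN_int.1.mk QN with hρdef
  have hρ : QN =ᵐ[μ] ρ := hQN_int.1.ae_eq_mk
  have hρm : StronglyMeasurable ρ := hQN_int.1.stronglyMeasurable_mk
  set B := {x | ρ x = 0} with hBdef
  have hBm : MeasurableSet B := hρm.measurable (measurableSet_singleton (0 : ℝ))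
  have hB0 : ∫ x in B, QN x ∂μ = 0 := by
    rw [integral_congr_ae (ae_restrict_of_ae hρ)]
    calc ∫ x in B, ρ x ∂μ = ∫ x in B, (0 : ℝ) ∂μ :=
          setIntegral_congr_fun hBm (fun x hx => hx)
      _ = 0 := by simp
  have hGzero : ∫ y, (∏ i, q (y i)) *
      ∑ j, (w (y j) / ∑ i, w (y i)) * B.indicator (fun _ => (1 : ℝ)) (y j)
      ∂(Measure.pi fun _ : Fin N => μ) = 0 := (hQN B hBm).trans hB0
  set G : (Fin N → X) → ℝ := fun y => (∏ i, q (y i)) *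
      ∑ j, (w (y j) / ∑ i, w (y i)) * B.indicator (fun _ => (1 : ℝ)) (y j) with hGdef
  have hGnn : ∀ y, 0 ≤ G y := by
    intro y
    refine mul_nonneg (Finset.prod_nonneg fun i _ => hq_nonneg _) ?_
    refine Finset.sum_nonneg fun j _ => mul_nonneg
      (div_nonneg (hwnn _) (Finset.sum_nonneg fun i _ => hwnn _))
      (Set.indicator_nonneg (fun _ _ => zero_le_one) _)
  set q' := hq_int.1.mk q with hq'def
  have hq' : q =ᵐ[μ] q' := hq_int.1.ae_eq_mk
  have hq'meas : Measurable q' := hq_int.1.stronglyMeasurable_mk.measurable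
  set π' := hπ_int.1.mk π with hπ'def
  have hπ' : π =ᵐ[μ] π' := hπ_int.1.ae_eq_mk
  have hπ'meas : Measurable π' := hπ_int.1.stronglyMeasurable_mk.measurable
  have hagree : ∀ᵐ y ∂(Measure.pi fun _ : Fin N => μ),
      ∀ i, q (y i) = q' (y i) ∧ π (y i) = π' (y i) := by
    rw [ae_all_iff]
    intro i
    have h1 : μ {x | ¬ (q x = q' x ∧ π x = π' x)} = 0 := ae_iff.mp (hq'.and hπ')
    exact ae_iff.mpr (sir_pi_eval_preimage_null μ i h1)
  -- a.e. strong measurability of G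
  set w' : X → ℝ := fun x => Z * π' x / q' x with hw'def
  have hw'meas : Measurable w' := (measurable_const.mul hπ'meas).div hq'meas
  set G' : (Fin N → X) → ℝ := fun y => (∏ i, q' (y i)) *
      ∑ j, (w' (y j) / ∑ i, w' (y i)) * B.indicator (fun _ => (1 : ℝ)) (y j) with hG'def
  have hG'm : Measurable G' := by
    refine Measurable.mul ?_ ?_
    · exact Finset.measurable_prod _ fun i _ => hq'meas.comp (measurable_pi_apply i)
    · refine Finset.measurable_sum _ fun j _ => Measurable.mul ?_ ?_
      · exact (hw'meas.comp (measurable_pi_apply j)).div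
          (Finset.measurable_sum _ fun i _ => hw'meas.comp (measurable_pi_apply i))
      · exact (measurable_const.indicator hBm).comp (measurable_pi_apply j)
  have hGG' : G =ᵐ[Measure.pi fun _ : Fin N => μ] G' := by
    filter_upwards [hagree] with y hy
    have hwy : ∀ i, w (y i) = w' (y i) := fun i => by
      rw [hw, hw'def, (hy i).1, (hy i).2]
    simp only [hGdef, hG'def]
    congr 1
    · exact Finset.prod_congr rfl fun i _ => (hy i).1
    · refine Finset.sum_congr rfl fun j _ => ?_
      rw [hwy j, Finset.sum_congr rfl fun i _ => hwy i]
  have hGsm : AEStronglyMeasurable G (Measure.pi fun _ : Fin N => μ) :=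
    ⟨G', hG'm.stronglyMeasurable, hGG'⟩
  have hqprod_int : Integrable (fun y : Fin N → X => ∏ i, q (y i))
      (Measure.pi fun _ : Fin N => μ) :=
    Integrable.fintype_prod (𝕜 := ℝ) (fun _ => hq_int)
  have hGint : Integrable G (Measure.pi fun _ : Fin N => μ) := by
    refine hqprod_int.mono' hGsm (Filter.Eventually.of_forall fun y => ?_)
    rw [Real.norm_eq_abs, abs_of_nonneg (hGnn y)]
    have hb : ∑ j, (w (y j) / ∑ i, w (y i)) * B.indicator (fun _ => (1 : ℝ)) (y j) ≤ 1 := by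
      have hb1 : ∀ j : Fin N, (w (y j) / ∑ i, w (y i)) * B.indicator (fun _ => (1 : ℝ)) (y j)
          ≤ w (y j) / ∑ i, w (y i) := by
        intro j
        have hin : B.indicator (fun _ => (1 : ℝ)) (y j) ≤ 1 := by
          by_cases h : y j ∈ B <;> simp [h]
        exact mul_le_of_le_one_right
          (div_nonneg (hwnn _) (Finset.sum_nonneg fun i _ => hwnn _)) hin
      calc ∑ j, (w (y j) / ∑ i, w (y i)) * B.indicator (fun _ => (1 : ℝ)) (y j)
          ≤ ∑ j, w (y j) / ∑ i, w (y i) := Finset.sum_le_sum fun j _ => hb1 j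
        _ = (∑ i, w (y i)) / (∑ i, w (y i)) := (Finset.sum_div _ _ _).symm
        _ ≤ 1 := by
            by_cases hS : (∑ i, w (y i)) = 0
            · simp [hS]
            · rw [div_self hS]
    calc G y ≤ (∏ i, q (y i)) * 1 :=
          mul_le_mul_of_nonneg_left hb (Finset.prod_nonneg fun i _ => hq_nonneg _)
      _ = ∏ i, q (y i) := mul_one _
  have hGae0 : G =ᵐ[Measure.pi fun _ : Fin N => μ] 0 :=
    (integral_eq_zero_iff_of_nonneg hGnn hGint).mp hGzero
  -- the bad set has measure zero
  set C := (B ∩ {x | 0 < π' x}) ∩ {x | 0 < q' x} with hCdef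
  have hCm : MeasurableSet C :=
    (hBm.inter (measurableSet_lt measurable_const hπ'meas)).inter
      (measurableSet_lt measurable_const hq'meas)
  have hC0 : μ C = 0 := by
    have hsub : ∀ᵐ y ∂(Measure.pi fun _ : Fin N => μ),
        y ∉ Set.pi Set.univ (fun _ : Fin N => C) := by
      filter_upwards [hGae0, hagree] with y hy0 hyag
      intro hyC
      have hyC' : ∀ i, y i ∈ C := fun i => hyC i (Set.mem_univ i)
      have hqpos : ∀ i, 0 < q (y i) := fun i => by rw [(hyag i).1]; exact (hyC' i).2
      have hπpos : ∀ i, 0 < π (y i) := fun i => by rw [(hyag i).2]; exact (hyC' i).1.2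
      have hwpos : ∀ i, 0 < w (y i) := fun i => by
        rw [hw]; exact div_pos (mul_pos hZ (hπpos i)) (hqpos i)
      have hS : 0 < ∑ i, w (y i) :=
        Finset.sum_pos (fun i _ => hwpos i) ⟨j0, Finset.mem_univ _⟩
      have hterm : 0 < (w (y j0) / ∑ i, w (y i)) * B.indicator (fun _ => (1 : ℝ)) (y j0) := by
        rw [Set.indicator_of_mem (hyC' j0).1.1, mul_one]
        exact div_pos (hwpos j0) hS
      have hsum : 0 < ∑ j, (w (y j) / ∑ i, w (y i)) * B.indicator (fun _ => (1 : ℝ)) (y j) :=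
        Finset.sum_pos'
          (fun j _ => mul_nonneg (div_nonneg (hwnn _) hS.le)
            (Set.indicator_nonneg (fun _ _ => zero_le_one) _))
          ⟨j0, Finset.mem_univ _, hterm⟩
      have hGpos : 0 < G y := mul_pos (Finset.prod_pos fun i _ => hqpos i) hsum
      have hy0' : G y = 0 := hy0
      rw [hy0'] at hGpos
      exact lt_irrefl _ hGpos
    have h9 : (Measure.pi fun _ : Fin N => μ) (Set.pi Set.univ fun _ : Fin N => C) = 0 := by
      have h10 := ae_iff.mp hsub
      have h10' : {y : Fin N → X | ¬ y ∉ Set.pi Set.univ fun _ : Fin N => C}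
          = Set.pi Set.univ fun _ : Fin N => C := by ext y; simp [not_not]
      rw [← h10']
      exact h10
    rw [Measure.pi_pi] at h9
    simp only [Finset.prod_const, Finset.card_univ, Fintype.card_fin] at h9
    exact (pow_eq_zero_iff hN.ne').mp h9
  -- the final a.e. identity
  have hae : ∀ᵐ x ∂μ, (Z * π x / QN x) * QN x = Z * π x := by
    have hCnm : ∀ᵐ x ∂μ, x ∉ C := measure_eq_zero_iff_ae_notMem.mp hC0
    filter_upwards [hρ, hq', hπ', hCnm] with x hx1 hx2 hx3 hx4
    by_cases hQ : QN x = 0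
    · have hπ0 : π x = 0 := by
        by_contra hπ0
        have hπpos : 0 < π x := lt_of_le_of_ne (hπ_nonneg x) (Ne.symm hπ0)
        have hqpos : 0 < q x :=
          lt_of_le_of_ne (hq_nonneg x) (Ne.symm fun h => hπ0 ((habs x).mp h))
        refine hx4 ⟨⟨?_, ?_⟩, ?_⟩
        · show ρ x = 0; rw [← hx1]; exact hQ
        · show 0 < π' x; rw [← hx3]; exact hπpos
        · show 0 < q' x; rw [← hx2]; exact hqpos
      simp [hQ, hπ0]
    · rw [div_mul_cancel₀ _ hQ]
  constructor
  · intro A hA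
    have h11 : ∫ x in A, (Z * π x / QN x) * QN x ∂μ = ∫ x in A, Z * π x ∂μ :=
      integral_congr_ae (ae_restrict_of_ae hae)
    rw [h11]
    exact hmain A hA
  · have h12 : ∀ y : Fin N → X,
        (∏ i, q (y i)) * ((∑ j, w (y j) / ∑ i, w (y i)) * ((∑ i, w (y i)) / (N : ℝ)))
        = (∏ i, q (y i)) *
            ∑ j, (w (y j) / ∑ i, w (y i)) * Set.univ.indicator (fun _ => (1 : ℝ)) (y j)
              * ((∑ i, w (y i)) / (N : ℝ)) := by
      intro y
      congr 1
      rw [Finset.sum_mul]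
      exact Finset.sum_congr rfl fun j _ => by simp
    simp_rw [h12]
    rw [hmain Set.univ MeasurableSet.univ, Measure.restrict_univ, integral_const_mul,
      hπ_norm, mul_one]
end
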